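/- For any probabilistic polyline sets X and Y over a metric space (E, d), any c > 0 and any 1 ≤ p < ∞, the DAP distance satisfies d_PLD^{(c,p)}(X, Y) ≥ ( (1/2)|R_X − R_Y| )^{1/p}. -/
import Mathlib


open scoped BigOperators

/-- A polyline: a finite sequence of points of `E`, given by its length and an
indexing function. -/
def Polyline (E : Type*) : Type _ := Σ n : ℕ, Fin n → E

/-- An ordered assignment set between `{1,…,n}` and `{1,…,m}`: each first index and each
second index appears at most once, and the pairs respect a strictly increasing order. -/
def IsOrderedAssignment {n m : ℕ} (θ : Finset (Fin n × Fin m)) : Prop :=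
  ∀ a ∈ θ, ∀ b ∈ θ, (a.1 < b.1 ↔ a.2 < b.2)

/-- A (not necessarily ordered) assignment set: each first index and each second index
appears at most once. -/
def IsAssignment {n m : ℕ} (θ : Finset (Fin n × Fin m)) : Prop :=
  ∀ a ∈ θ, ∀ b ∈ θ, (a.1 = b.1 ↔ a.2 = b.2)

/-- The assignment cost `C(θ, x, y)` of an assignment set `θ` between polylines `x` and `y`. -/
noncomputable def cost {E : Type*} [MetricSpace E] (c p : ℝ) (x y : Polyline E)
    (θ : Finset (Fin x.1 × Fin y.1)) : ℝ :=
  (∑ ij ∈ θ, dist (x.2 ij.1) (y.2 ij.2) ^ p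
    + c ^ p / 2 * ((x.1 : ℝ) + (y.1 : ℝ) - 2 * (θ.card : ℝ))) ^ (1 / p)

/-- The SOSPA distance: the minimum assignment cost over all ordered assignment sets. -/
noncomputable def dSOSPA {E : Type*} [MetricSpace E] (c p : ℝ) (x y : Polyline E) : ℝ :=
  ⨅ θ : {θ : Finset (Fin x.1 × Fin y.1) // IsOrderedAssignment θ}, cost c p x y θ.1

/-- The normalized SOSPA, valued in `[0,1]`, with the convention that it is `0` when
both polylines are empty. -/
noncomputable def dSOSPAn {E : Type*} [MetricSpace E] (c p : ℝ) (x y : Polyline E) : ℝ :=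
  if x.1 = 0 ∧ y.1 = 0 then 0
  else 2 * dSOSPA c p x y /
    ((c ^ p / 2 * ((x.1 : ℝ) + (y.1 : ℝ))) ^ (1 / p) + dSOSPA c p x y)

/-- The cost of a trace `T` (an ordered assignment set) for the generalized edit distance
with substitution costs `γsub`, deletion costs `γdel`, and insertion costs `γins`. -/
noncomputable def traceCost {n m : ℕ} (γsub : Fin n → Fin m → ℝ) (γdel : Fin n → ℝ)
    (γins : Fin m → ℝ) (T : Finset (Fin n × Fin m)) : ℝ :=
  ∑ ij ∈ T, γsub ij.1 ij.2
    + ∑ i ∈ Finset.univ.filter (fun i => ∀ j, (i, j) ∉ T), γdel i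
    + ∑ j ∈ Finset.univ.filter (fun j => ∀ i, (i, j) ∉ T), γins j

/-- The composition `θ₁ ∘ θ₂` of two assignment sets. -/
def composeAssignment {n k m : ℕ} (θ₁ : Finset (Fin n × Fin k)) (θ₂ : Finset (Fin k × Fin m)) :
    Finset (Fin n × Fin m) :=
  Finset.univ.filter fun im => ∃ j, (im.1, j) ∈ θ₁ ∧ (j, im.2) ∈ θ₂

/-- The cyclic shift `S_s(x)` of a polyline `x`: the `k`-th point of `S_s(x)` is the
`⟨k+s⟩_{|x|}`-th point of `x`. -/
def shift {E : Type*} (s : ℕ) (x : Polyline E) : Polyline E :=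
  ⟨x.1, fun i => x.2 ⟨((i : ℕ) + s) % x.1, Nat.mod_lt _ i.pos⟩⟩

/-- A probabilistic polyline set: a finite indexed family of confidence–polyline pairs,
with confidences in `[0,1]`. -/
structure PPSet (E : Type*) where
  n : ℕ
  r : Fin n → ℝ
  poly : Fin n → Polyline E
  r_nonneg : ∀ i, 0 ≤ r i
  r_le_one : ∀ i, r i ≤ 1

/-- `R_X`, the total confidence of a probabilistic polyline set. -/
noncomputable def totalR {E : Type*} (X : PPSet E) : ℝ := ∑ i, X.r i

/-- The DAP distance `d_PLD^{(c,p)}` between two probabilistic polyline sets. -/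
noncomputable def dPLD {E : Type*} [MetricSpace E] (c p : ℝ) (X Y : PPSet E) : ℝ :=
  (⨅ θ : {θ : Finset (Fin X.n × Fin Y.n) // IsAssignment θ},
    (∑ ij ∈ θ.1, (min (X.r ij.1) (Y.r ij.2) * dSOSPAn c p (X.poly ij.1) (Y.poly ij.2) ^ p
        + |X.r ij.1 - Y.r ij.2| / 2)
      + (∑ i ∈ Finset.univ.filter (fun i => ∀ j, (i, j) ∉ θ.1), X.r i
          + ∑ j ∈ Finset.univ.filter (fun j => ∀ i, (i, j) ∉ θ.1), Y.r j) / 2)) ^ (1 / p)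

/-- The DAP similarity (for `p = 1`). -/
noncomputable def SPLD {E : Type*} [MetricSpace E] (c : ℝ) (X Y : PPSet E) : ℝ :=
  ((totalR X + totalR Y) / 2 - dPLD c 1 X Y) / 2

/-- The normalized DAP, with the convention that it equals `0` when the denominator is `0`. -/
noncomputable def dPLDn {E : Type*} [MetricSpace E] (c p : ℝ) (X Y : PPSet E) : ℝ :=
  if ((totalR X + totalR Y) / 2) ^ (1 / p) + dPLD c p X Y = 0 then 0
  else 2 * dPLD c p X Y / (((totalR X + totalR Y) / 2) ^ (1 / p) + dPLD c p X Y)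

/-- The multiset of confidence–polyline pairs of a probabilistic polyline set. -/
def PPSet.toMultiset {E : Type*} (X : PPSet E) : Multiset (ℝ × Polyline E) :=
  Finset.univ.val.map fun i => (X.r i, X.poly i)
lemma ordered_card_le {n m : ℕ} (θ : Finset (Fin n × Fin m)) (hθ : IsOrderedAssignment θ) :
    2 * (θ.card : ℝ) ≤ (n : ℝ) + m := by
  have hfst : Set.InjOn Prod.fst (θ : Set (Fin n × Fin m)) := by
    intro a ha b hb h
    have h2 : a.2 = b.2 := by
      rcases lt_trichotomy a.2 b.2 with hlt | heq | hgt
      · exact absurd ((hθ a ha b hb).mpr hlt) (by simp [h])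
      · exact heq
      · exact absurd ((hθ b hb a ha).mpr hgt) (by simp [h])
    exact Prod.ext h h2
  have hsnd : Set.InjOn Prod.snd (θ : Set (Fin n × Fin m)) := by
    intro a ha b hb h
    have h1 : a.1 = b.1 := by
      rcases lt_trichotomy a.1 b.1 with hlt | heq | hgt
      · exact absurd ((hθ a ha b hb).mp hlt) (by simp [h])
      · exact heq
      · exact absurd ((hθ b hb a ha).mp hgt) (by simp [h])
    exact Prod.ext h1 h
  have h1 : θ.card ≤ n := by
    calc θ.card = (θ.image Prod.fst).card := (Finset.card_image_of_injOn hfst).symm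
      _ ≤ (Finset.univ : Finset (Fin n)).card := Finset.card_le_card (Finset.subset_univ _)
      _ = n := Finset.card_fin n
  have h2 : θ.card ≤ m := by
    calc θ.card = (θ.image Prod.snd).card := (Finset.card_image_of_injOn hsnd).symm
      _ ≤ (Finset.univ : Finset (Fin m)).card := Finset.card_le_card (Finset.subset_univ _)
      _ = m := Finset.card_fin m
  have := (Nat.cast_le (α := ℝ)).mpr h1
  have := (Nat.cast_le (α := ℝ)).mpr h2
  linarith

lemma cost_nonneg {E : Type*} [MetricSpace E] {c p : ℝ} (hc : 0 < c)
    (x y : Polyline E) (θ : Finset (Fin x.1 × Fin y.1)) (hθ : IsOrderedAssignment θ) :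
    0 ≤ cost c p x y θ := by
  apply Real.rpow_nonneg
  have h1 : 0 ≤ ∑ ij ∈ θ, dist (x.2 ij.1) (y.2 ij.2) ^ p :=
    Finset.sum_nonneg fun _ _ => Real.rpow_nonneg dist_nonneg p
  have hc' : 0 ≤ c ^ p := Real.rpow_nonneg hc.le p
  have hcard := ordered_card_le θ hθ
  nlinarith

instance orderedAssignmentNonempty {n m : ℕ} :
    Nonempty {θ : Finset (Fin n × Fin m) // IsOrderedAssignment θ} :=
  ⟨⟨∅, fun a ha => absurd ha (Finset.notMem_empty a)⟩⟩

instance assignmentNonempty {n m : ℕ} :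
    Nonempty {θ : Finset (Fin n × Fin m) // IsAssignment θ} :=
  ⟨⟨∅, fun a ha => absurd ha (Finset.notMem_empty a)⟩⟩

lemma dSOSPA_nonneg {E : Type*} [MetricSpace E] {c : ℝ} (p : ℝ) (hc : 0 < c)
    (x y : Polyline E) : 0 ≤ dSOSPA c p x y :=
  Real.iInf_nonneg fun θ => cost_nonneg hc x y θ.1 θ.2

lemma dSOSPAn_nonneg {E : Type*} [MetricSpace E] {c : ℝ} (p : ℝ) (hc : 0 < c)
    (x y : Polyline E) : 0 ≤ dSOSPAn c p x y := by
  unfold dSOSPAn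
  split
  · exact le_rfl
  · exact div_nonneg (by linarith [dSOSPA_nonneg p hc x y])
      (add_nonneg (Real.rpow_nonneg (by positivity) _) (dSOSPA_nonneg p hc x y))

lemma sum_matched_fst {n m : ℕ} (θ : Finset (Fin n × Fin m)) (hθ : IsAssignment θ)
    (f : Fin n → ℝ) :
    ∑ ij ∈ θ, f ij.1 + ∑ i ∈ Finset.univ.filter (fun i => ∀ j, (i, j) ∉ θ), f i
      = ∑ i, f i := by
  have hinj : ∀ a ∈ θ, ∀ b ∈ θ, a.1 = b.1 → a = b := by
    intro a ha b hb h
    exact Prod.ext h ((hθ a ha b hb).mp h)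
  rw [← Finset.sum_image (f := f) hinj]
  have hset : Finset.univ.filter (fun i => ∀ j, (i, j) ∉ θ)
      = Finset.univ \ θ.image Prod.fst := by
    ext i
    simp only [Finset.mem_filter, Finset.mem_univ, true_and, Finset.mem_sdiff,
      Finset.mem_image, not_exists]
    constructor
    · rintro h ⟨a, b⟩ ⟨hab, rfl⟩
      exact h b hab
    · intro h j hj
      exact h (i, j) ⟨hj, rfl⟩
  rw [hset, add_comm]
  exact Finset.sum_sdiff (Finset.subset_univ _)

lemma sum_matched_snd {n m : ℕ} (θ : Finset (Fin n × Fin m)) (hθ : IsAssignment θ)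
    (f : Fin m → ℝ) :
    ∑ ij ∈ θ, f ij.2 + ∑ j ∈ Finset.univ.filter (fun j => ∀ i, (i, j) ∉ θ), f j
      = ∑ j, f j := by
  have hinj : ∀ a ∈ θ, ∀ b ∈ θ, a.2 = b.2 → a = b := by
    intro a ha b hb h
    exact Prod.ext ((hθ a ha b hb).mpr h) h
  rw [← Finset.sum_image (f := f) hinj]
  have hset : Finset.univ.filter (fun j => ∀ i, (i, j) ∉ θ)
      = Finset.univ \ θ.image Prod.snd := by
    ext j
    simp only [Finset.mem_filter, Finset.mem_univ, true_and, Finset.mem_sdiff,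
      Finset.mem_image, not_exists]
    constructor
    · rintro h ⟨a, b⟩ ⟨hab, rfl⟩
      exact h a hab
    · intro h i hi
      exact h (i, j) ⟨hi, rfl⟩
  rw [hset, add_comm]
  exact Finset.sum_sdiff (Finset.subset_univ _)

/-- The DAP distance satisfies
`d_PLD^{(c,p)}(X,Y) ≥ ((1/2)|R_X − R_Y|)^{1/p}`. -/
theorem dPLD_ge {E : Type*} [MetricSpace E] (c p : ℝ) (hc : 0 < c) (hp : 1 ≤ p)
    (X Y : PPSet E) :
    (|totalR X - totalR Y| / 2) ^ (1 / p) ≤ dPLD c p X Y := by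
  have hp0 : 0 < p := lt_of_lt_of_le one_pos hp
  unfold dPLD
  apply Real.rpow_le_rpow (by positivity) ?_ (by positivity)
  apply le_ciInf
  rintro ⟨θ, hθ⟩
  set A := ∑ i ∈ Finset.univ.filter (fun i => ∀ j, (i, j) ∉ θ), X.r i with hAdef
  set B := ∑ j ∈ Finset.univ.filter (fun j => ∀ i, (i, j) ∉ θ), Y.r j with hBdef
  have hA : 0 ≤ A := Finset.sum_nonneg fun i _ => X.r_nonneg i
  have hB : 0 ≤ B := Finset.sum_nonneg fun j _ => Y.r_nonneg j
  have hX : ∑ ij ∈ θ, X.r ij.1 + A = totalR X := sum_matched_fst θ hθ X.r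
  have hY : ∑ ij ∈ θ, Y.r ij.2 + B = totalR Y := sum_matched_snd θ hθ Y.r
  have habs : |totalR X - totalR Y| ≤ ∑ ij ∈ θ, |X.r ij.1 - Y.r ij.2| + (A + B) := by
    have heq : totalR X - totalR Y
        = (∑ ij ∈ θ, (X.r ij.1 - Y.r ij.2)) + (A - B) := by
      rw [Finset.sum_sub_distrib]; linarith
    rw [heq]
    calc |(∑ ij ∈ θ, (X.r ij.1 - Y.r ij.2)) + (A - B)|
        ≤ |∑ ij ∈ θ, (X.r ij.1 - Y.r ij.2)| + |A - B| := abs_add_le _ _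
      _ ≤ ∑ ij ∈ θ, |X.r ij.1 - Y.r ij.2| + (A + B) := by
          have h1 := Finset.abs_sum_le_sum_abs
            (fun ij : Fin X.n × Fin Y.n => X.r ij.1 - Y.r ij.2) θ
          have h2 : |A - B| ≤ A + B := by
            rw [abs_sub_le_iff]; constructor <;> linarith
          linarith
  have hsplit : ∑ ij ∈ θ, (min (X.r ij.1) (Y.r ij.2)
        * dSOSPAn c p (X.poly ij.1) (Y.poly ij.2) ^ p + |X.r ij.1 - Y.r ij.2| / 2)
      = ∑ ij ∈ θ, min (X.r ij.1) (Y.r ij.2)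
          * dSOSPAn c p (X.poly ij.1) (Y.poly ij.2) ^ p
        + (∑ ij ∈ θ, |X.r ij.1 - Y.r ij.2|) / 2 := by
    rw [Finset.sum_add_distrib, Finset.sum_div]
  have hterm : 0 ≤ ∑ ij ∈ θ, min (X.r ij.1) (Y.r ij.2)
      * dSOSPAn c p (X.poly ij.1) (Y.poly ij.2) ^ p := by
    apply Finset.sum_nonneg
    intro ij _
    exact mul_nonneg (le_min (X.r_nonneg ij.1) (Y.r_nonneg ij.2))
      (Real.rpow_nonneg (dSOSPAn_nonneg p hc _ _) p)
  rw [hsplit]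
  linarith
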